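/- arXiv:1303.6875 — 6 statements merged into one kernel-verified Lean document; each statement's English description precedes it below -/
import Mathlib

section
/- Let Z and Y be G-sets and let a, b: Z → Y be G-equivariant maps such that b = u*a for some G-equivariant map u: Z → G^c. Then a is bijective if and only if b is bijective. (Hence a morphism in the category of fused G-sets is an isomorphism if and only if any of its representatives is an isomorphism of G-sets.) -/
/-! An equivariant `u : Z → G^c` gives the permutation `z ↦ u z • z` of `Z`: since `u z` commutes
with itself, `u` is constant along `z ↦ u z ^ n • z`, so `z ↦ (u z)⁻¹ • z` is its inverse.
Equivariance of `a` turns `u * a` into `a` precomposed with this permutation. -/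

namespace MulAction

variable {G Z : Type*} [Group G] [MulAction G Z] {u : Z → G}

theorem apply_zpow_smul_self (hu : ∀ (t : G) (z : Z), u (t • z) = t * u z * t⁻¹)
    (z : Z) (n : ℤ) : u (u z ^ n • z) = u z := by
  rw [hu, (Commute.zpow_self (u z) n).eq, mul_inv_cancel_right]

variable (u) in
def smulSelfPerm (hu : ∀ (t : G) (z : Z), u (t • z) = t * u z * t⁻¹) : Equiv.Perm Z where
  toFun z := u z • z
  invFun z := (u z)⁻¹ • z
  left_inv z := by
    simpa using congrArg (fun g => g⁻¹ • u z • z) (apply_zpow_smul_self hu z 1)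
  right_inv z := by
    simpa using congrArg (fun g => g • (u z)⁻¹ • z) (apply_zpow_smul_self hu z (-1))

end MulAction

theorem stmt_4_general (G Z Y : Type*) [Group G] [MulAction G Z] [MulAction G Y]
    (a b : Z → Y) (u : Z → G)
    (ha : ∀ (t : G) (z : Z), a (t • z) = t • a z)
    (hu : ∀ (t : G) (z : Z), u (t • z) = t * u z * t⁻¹)
    (hba : ∀ z : Z, b z = u z • a z) :
    Function.Bijective a ↔ Function.Bijective b := by
  have hb : b = a ∘ MulAction.smulSelfPerm u hu := funext fun z => (hba z).trans (ha _ _).symm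
  rw [hb, Equiv.bijective_comp]

/-- Let `Z`, `Y` be `G`-sets and `a, b : Z → Y` equivariant maps with `b = u*a` for some
equivariant `u : Z → G^c`. Then `a` is bijective iff `b` is bijective. -/
theorem stmt_4 (G Z Y : Type*) [Group G] [MulAction G Z] [MulAction G Y]
    (a b : Z → Y) (u : Z → G)
    (ha : ∀ (t : G) (z : Z), a (t • z) = t • a z)
    (hb : ∀ (t : G) (z : Z), b (t • z) = t • b z)
    (hu : ∀ (t : G) (z : Z), u (t • z) = t * u z * t⁻¹)
    (hba : ∀ z : Z, b z = u z • a z) :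
    Function.Bijective a ↔ Function.Bijective b :=
  stmt_4_general G Z Y a b u ha hu hba
end

section
/- Let Y be a G-set and set Y^I = Y × G^c with the diagonal G-action t·(y,g) = (t·y, t g t⁻¹). The maps p: Y^I → Y × Y, p(y,g) = (y, g·y), and i: Y → Y^I, i(y) = (y, 1), are G-equivariant (Y × Y carrying the diagonal action), and p ∘ i is the diagonal map y ↦ (y,y). Moreover, for G-equivariant maps a, b: Z → Y from a G-set Z, there exists a G-equivariant u: Z → G^c with b = u*a if and only if the map (a,b): Z → Y × Y, z ↦ (a(z), b(z)), factors as (a,b) = p ∘ φ for some G-equivariant map φ: Z → Y^I. -/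
/-- Path-object characterization of equality in the fused category. `Y^I = Y × G^c` carries the
action `t·(y,g) = (t•y, t g t⁻¹)`. The maps `p : Y^I → Y × Y, (y,g) ↦ (y, g•y)` and
`i : Y → Y^I, y ↦ (y,1)` are equivariant, `p ∘ i` is the diagonal, and for equivariant
`a, b : Z → Y` there is an equivariant `u : Z → G^c` with `b = u*a` iff `(a,b) : Z → Y × Y`
factors through `p` via an equivariant `φ : Z → Y^I`. -/
theorem stmt_5 (G Y Z : Type*) [Group G] [MulAction G Y] [MulAction G Z]
    (a b : Z → Y)
    (ha : ∀ (t : G) (z : Z), a (t • z) = t • a z)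
    (hb : ∀ (t : G) (z : Z), b (t • z) = t • b z) :
    (∀ (t g : G) (y : Y),
      (fun q : Y × G => (q.1, q.2 • q.1)) (t • y, t * g * t⁻¹)
        = (t • ((fun q : Y × G => (q.1, q.2 • q.1)) (y, g)).1,
           t • ((fun q : Y × G => (q.1, q.2 • q.1)) (y, g)).2)) ∧
    (∀ (t : G) (y : Y),
      ((fun y : Y => ((y, (1 : G)) : Y × G)) (t • y)).1 = t • ((fun y : Y => ((y, (1 : G)) : Y × G)) y).1 ∧
      ((fun y : Y => ((y, (1 : G)) : Y × G)) (t • y)).2 = t * ((fun y : Y => ((y, (1 : G)) : Y × G)) y).2 * t⁻¹) ∧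
    (∀ y : Y, (fun q : Y × G => (q.1, q.2 • q.1)) ((y, (1 : G)) : Y × G) = (y, y)) ∧
    ((∃ u : Z → G, (∀ (t : G) (z : Z), u (t • z) = t * u z * t⁻¹) ∧ ∀ z : Z, b z = u z • a z) ↔
      (∃ φ : Z → Y × G,
        (∀ (t : G) (z : Z), φ (t • z) = (t • (φ z).1, t * (φ z).2 * t⁻¹)) ∧
        ∀ z : Z, (fun q : Y × G => (q.1, q.2 • q.1)) (φ z) = (a z, b z))) := by
  refine ⟨?_, ?_, ?_, ?_⟩
  · intro t g y
    simp [mul_smul]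
  · intro t y
    simp
  · intro y
    simp
  · constructor
    · rintro ⟨u, hu, hbu⟩
      refine ⟨fun z => (a z, u z), ?_, ?_⟩
      · intro t z
        simp [ha, hu]
      · intro z
        simp [hbu]
    · rintro ⟨φ, hφ, hpφ⟩
      refine ⟨fun z => (φ z).2, ?_, ?_⟩
      · intro t z
        show (φ (t • z)).2 = _
        rw [hφ]
      · intro z
        have := hpφ z
        simp only at this
        have h1 : (φ z).1 = a z := congrArg Prod.fst this
        have h2 : (φ z).2 • (φ z).1 = b z := congrArg Prod.snd this
        rw [← h2, h1]
end

section
/- Let X, Y, Z be G-sets, let a: X → Z, b: Y → Z be G-equivariant maps, and let v: X → G^c, w: Y → G^c be G-equivariant maps; set a' = v*a and b' = w*b. Then the map f: X×_{a',b'}Y → X×_{a,b}Y given by f(x,y) = (v(x)·x, w(y)·y) is well defined (i.e. a(v(x)·x) = b(w(y)·y) whenever a'(x) = b'(y)), G-equivariant, and bijective; moreover p ∘ f = (v*Id_X) ∘ p' and q ∘ f = (w*Id_Y) ∘ q', where p, q (resp. p', q') are the projections of X×_{a,b}Y (resp. X×_{a',b'}Y). In particular the weak pullback X×_{a,b}Y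 depends, up to G-equivariant bijection, only on the classes of a and b as morphisms of fused G-sets. -/
/-- Independence of the weak pullback of the chosen representatives: with `a' = v*a` and
`b' = w*b`, the map `f(x,y) = (v x • x, w y • y)` is well defined from `X×_{a',b'}Y` to
`X×_{a,b}Y`, equivariant, restricts to a bijection between the two pullbacks, and satisfies
`p ∘ f = (v*Id_X) ∘ p'` and `q ∘ f = (w*Id_Y) ∘ q'`. -/
theorem stmt_7 (G X Y Z : Type*) [Group G] [MulAction G X] [MulAction G Y] [MulAction G Z]
    (a : X → Z) (b : Y → Z) (v : X → G) (w : Y → G)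
    (ha : ∀ (g : G) (x : X), a (g • x) = g • a x)
    (hb : ∀ (g : G) (y : Y), b (g • y) = g • b y)
    (hv : ∀ (g : G) (x : X), v (g • x) = g * v x * g⁻¹)
    (hw : ∀ (g : G) (y : Y), w (g • y) = g * w y * g⁻¹) :
    (∀ p : X × Y, v p.1 • a p.1 = w p.2 • b p.2 →
      a ((fun p : X × Y => (v p.1 • p.1, w p.2 • p.2)) p).1
        = b ((fun p : X × Y => (v p.1 • p.1, w p.2 • p.2)) p).2) ∧
    (∀ (g : G) (p : X × Y),
      (fun p : X × Y => (v p.1 • p.1, w p.2 • p.2)) (g • p)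
        = g • (fun p : X × Y => (v p.1 • p.1, w p.2 • p.2)) p) ∧
    Set.BijOn (fun p : X × Y => (v p.1 • p.1, w p.2 • p.2))
      {p : X × Y | v p.1 • a p.1 = w p.2 • b p.2} {p : X × Y | a p.1 = b p.2} ∧
    (∀ p : X × Y,
      ((fun p : X × Y => (v p.1 • p.1, w p.2 • p.2)) p).1 = v p.1 • p.1 ∧
      ((fun p : X × Y => (v p.1 • p.1, w p.2 • p.2)) p).2 = w p.2 • p.2) := by
  have key : ∀ x : X, v (v x • x) = v x := fun x => by
    rw [hv]; group
  have keyw : ∀ y : Y, w (w y • y) = w y := fun y => by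
    rw [hw]; group
  refine ⟨fun p hp => ?_, fun g p => ?_, ⟨fun p hp => ?_, fun p hp q hq h => ?_, fun p hp => ?_⟩, fun p => ⟨rfl, rfl⟩⟩
  · simpa [ha, hb] using hp
  · simp only [Prod.smul_mk, Prod.smul_fst, Prod.smul_snd, hv, hw, Prod.mk.injEq,
      mul_smul, inv_smul_smul, and_self]
  · simpa [ha, hb] using hp
  · simp only [Prod.mk.injEq] at h
    have h1 : p.1 = q.1 := by
      have := congrArg (fun x => (v (v p.1 • p.1))⁻¹ • x) h.1
      simpa [key, h.1 ▸ (key q.1).symm] using this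
    have h2 : p.2 = q.2 := by
      have := congrArg (fun y => (w (w p.2 • p.2))⁻¹ • y) h.2
      simpa [keyw, h.2 ▸ (keyw q.2).symm] using this
    exact Prod.ext h1 h2
  · refine ⟨((v p.1)⁻¹ • p.1, (w p.2)⁻¹ • p.2), ?_, ?_⟩
    · have hv1 : v ((v p.1)⁻¹ • p.1) = v p.1 := by rw [hv]; group
      have hw1 : w ((w p.2)⁻¹ • p.2) = w p.2 := by rw [hw]; group
      simp only [Set.mem_setOf_eq, hv1, hw1, ha, hb, smul_inv_smul]
      exact hp
    · have hv1 : v ((v p.1)⁻¹ • p.1) = v p.1 := by rw [hv]; group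
      have hw1 : w ((w p.2)⁻¹ • p.2) = w p.2 := by rw [hw]; group
      simp [hv1, hw1]
end

section
/- Let Z and Z' be G-sets, and equip G × Z and G × Z' with the (G × G)-action (s,t)·(g,z) = (s g t⁻¹, t·z). Then every (G × G)-equivariant map θ: G × Z → G × Z' is of the form θ(g,z) = (g·u(z), v(z)), where u: Z → G^c is a G-equivariant map and v: Z → Z' is a G-equivariant map; conversely every map of this form with u, v G-equivariant is (G × G)-equivariant. Moreover θ is bijective if and only if v is bijective. -/
/-- With the `(G × G)`-action `(s,t)·(g,z) = (s g t⁻¹, t • z)` on `G × Z` and `G × Z'`: every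
`(G × G)`-equivariant map `θ : G × Z → G × Z'` has the form `θ(g,z) = (g * u z, v z)` with
`u : Z → G^c` and `v : Z → Z'` equivariant; conversely every map of this form is
`(G × G)`-equivariant; and such a `θ` is bijective iff `v` is bijective. -/
theorem stmt_8 (G Z Z' : Type*) [Group G] [MulAction G Z] [MulAction G Z'] :
    (∀ θ : G × Z → G × Z',
      (∀ (s t g : G) (z : Z),
        θ (s * g * t⁻¹, t • z) = (s * (θ (g, z)).1 * t⁻¹, t • (θ (g, z)).2)) →
      ∃ (u : Z → G) (v : Z → Z'),
        (∀ (t : G) (z : Z), u (t • z) = t * u z * t⁻¹) ∧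
        (∀ (t : G) (z : Z), v (t • z) = t • v z) ∧
        ∀ (g : G) (z : Z), θ (g, z) = (g * u z, v z)) ∧
    (∀ (u : Z → G) (v : Z → Z'),
      (∀ (t : G) (z : Z), u (t • z) = t * u z * t⁻¹) →
      (∀ (t : G) (z : Z), v (t • z) = t • v z) →
      ∀ (s t g : G) (z : Z),
        (fun p : G × Z => (p.1 * u p.2, v p.2)) (s * g * t⁻¹, t • z)
          = (s * ((fun p : G × Z => (p.1 * u p.2, v p.2)) (g, z)).1 * t⁻¹,
             t • ((fun p : G × Z => (p.1 * u p.2, v p.2)) (g, z)).2)) ∧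
    (∀ (u : Z → G) (v : Z → Z'),
      (∀ (t : G) (z : Z), u (t • z) = t * u z * t⁻¹) →
      (∀ (t : G) (z : Z), v (t • z) = t • v z) →
      (Function.Bijective (fun p : G × Z => (p.1 * u p.2, v p.2)) ↔ Function.Bijective v)) := by
  refine ⟨?_, ?_, ?_⟩
  · intro θ hθ
    refine ⟨fun z => (θ (1, z)).1, fun z => (θ (1, z)).2, ?_, ?_, ?_⟩
    · intro t z
      have := hθ t t 1 z
      simp only [mul_one, mul_inv_cancel] at this
      simp only [this]
    · intro t z
      have := hθ t t 1 z
      simp only [mul_one, mul_inv_cancel] at this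
      simp only [this]
    · intro g z
      have := hθ g 1 1 z
      simp only [mul_one, inv_one, one_smul] at this
      rw [this]
  · intro u v hu hv s t g z
    simp only [hu, hv]
    refine Prod.ext ?_ rfl
    simp only
    group
  · intro u v hu hv
    constructor
    · rintro ⟨hinj, hsurj⟩
      constructor
      · intro z₁ z₂ h
        have := hinj (a₁ := ((u z₁)⁻¹, z₁)) (a₂ := ((u z₂)⁻¹, z₂)) (by
          simp only [inv_mul_cancel, h])
        exact (Prod.ext_iff.1 this).2
      · intro z'
        obtain ⟨⟨g, z⟩, hp⟩ := hsurj (1, z')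
        exact ⟨z, (Prod.ext_iff.1 hp).2⟩
    · rintro ⟨hinj, hsurj⟩
      constructor
      · rintro ⟨g₁, z₁⟩ ⟨g₂, z₂⟩ h
        simp only [Prod.mk.injEq] at h
        have hz : z₁ = z₂ := hinj h.2
        subst hz
        exact Prod.ext (by simpa using h.1) rfl
      · rintro ⟨g, z'⟩
        obtain ⟨z, hz⟩ := hsurj z'
        exact ⟨(g * (u z)⁻¹, z), by simp [hz]⟩
end

section
/- Let X, Y, Z, Z' be G-sets with G-equivariant maps a: Z → X, b: Z → Y, a': Z' → X, b': Z' → Y. Equip G × Z and G × Z' with the (G × G)-action (s,t)·(g,z) = (s g t⁻¹, t·z), and Y × X with the (G × G)-action (s,t)·(y,x) = (s·y, t·x). Consider the (G × G)-equivariant maps G × Z → Y × X, (g,z) ↦ (g·b(z), a(z)), and G × Z' → Y × X, (g,z') ↦ (g·b'(z'), a'(z')). Then there exists a (G × G)-equivariant bijection θ: G × Z → G × Z' commuting with these two maps to Y × X if and only if there exist a G-equivariant map u: Z → G^c and a G-equivariant bijection v: Z → Z' such that a' ∘ v = a and b' ∘ v = u*b. -/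
/-- There is a `(G × G)`-equivariant bijection `θ : G × Z → G × Z'` (for the action
`(s,t)·(g,z) = (s g t⁻¹, t • z)`) commuting with the maps `(g,z) ↦ (g • b z, a z)` and
`(g,z') ↦ (g • b' z', a' z')` to `Y × X` iff there exist an equivariant `u : Z → G^c` and an
equivariant bijection `v : Z → Z'` with `a' ∘ v = a` and `b' ∘ v = u*b`. -/
theorem stmt_9 (G X Y Z Z' : Type*) [Group G] [MulAction G X] [MulAction G Y] [MulAction G Z]
    [MulAction G Z']
    (a : Z → X) (b : Z → Y) (a' : Z' → X) (b' : Z' → Y)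
    (ha : ∀ (t : G) (z : Z), a (t • z) = t • a z)
    (hb : ∀ (t : G) (z : Z), b (t • z) = t • b z)
    (ha' : ∀ (t : G) (z : Z'), a' (t • z) = t • a' z)
    (hb' : ∀ (t : G) (z : Z'), b' (t • z) = t • b' z) :
    (∃ θ : G × Z → G × Z',
      Function.Bijective θ ∧
      (∀ (s t g : G) (z : Z),
        θ (s * g * t⁻¹, t • z) = (s * (θ (g, z)).1 * t⁻¹, t • (θ (g, z)).2)) ∧
      (∀ (g : G) (z : Z),
        ((θ (g, z)).1 • b' (θ (g, z)).2, a' (θ (g, z)).2) = (g • b z, a z))) ↔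
    (∃ (u : Z → G) (v : Z → Z'),
      (∀ (t : G) (z : Z), u (t • z) = t * u z * t⁻¹) ∧
      (∀ (t : G) (z : Z), v (t • z) = t • v z) ∧
      Function.Bijective v ∧
      (∀ z : Z, a' (v z) = a z) ∧
      (∀ z : Z, b' (v z) = u z • b z)) := by
  constructor
  · rintro ⟨θ, hbij, heq, hcomm⟩
    set p : Z → G := fun z => (θ (1, z)).1 with hp
    set q : Z → Z' := fun z => (θ (1, z)).2 with hq
    have hθ : ∀ (g : G) (z : Z), θ (g, z) = (g * p z, q z) := by
      intro g z
      have := heq g 1 1 z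
      simpa using this
    have hp_eq : ∀ (t : G) (z : Z), p (t • z) = t * p z * t⁻¹ := by
      intro t z
      have := heq 1 t 1 z
      simp only [one_mul, mul_one, mul_inv_cancel] at this
      have h1 : θ (t⁻¹, t • z) = (1 * (θ (1, z)).1 * t⁻¹, t • (θ (1, z)).2) := by
        simpa using heq 1 t 1 z
      have h2 := hθ t⁻¹ (t • z)
      rw [h2] at h1
      have := congrArg Prod.fst h1
      simp only at this
      have : t⁻¹ * p (t • z) = p z * t⁻¹ := by simpa using this
      calc p (t • z) = t * (t⁻¹ * p (t • z)) := by group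
        _ = t * (p z * t⁻¹) := by rw [this]
        _ = t * p z * t⁻¹ := by group
    have hq_eq : ∀ (t : G) (z : Z), q (t • z) = t • q z := by
      intro t z
      have h1 : θ (t⁻¹, t • z) = (1 * (θ (1, z)).1 * t⁻¹, t • (θ (1, z)).2) := by
        simpa using heq 1 t 1 z
      have h2 := hθ t⁻¹ (t • z)
      rw [h2] at h1
      exact congrArg Prod.snd h1
    refine ⟨fun z => (p z)⁻¹, q, ?_, hq_eq, ?_, ?_, ?_⟩
    · intro t z; simp only; rw [hp_eq]; group
    · constructor
      · intro z1 z2 h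
        have : θ ((p z1)⁻¹, z1) = θ ((p z2)⁻¹, z2) := by
          rw [hθ, hθ, h]
          simp
        have := hbij.1 this
        exact (Prod.mk.injEq _ _ _ _ ▸ this).2
      · intro z'
        obtain ⟨⟨g, z⟩, hz⟩ := hbij.2 (1, z')
        refine ⟨z, ?_⟩
        rw [hθ] at hz
        exact (Prod.mk.injEq _ _ _ _ ▸ hz).2
    · intro z
      have := hcomm 1 z
      rw [hθ] at this
      exact (Prod.mk.injEq _ _ _ _ ▸ this).2
    · intro z
      have := hcomm 1 z
      rw [hθ] at this
      have h1 := (Prod.mk.injEq _ _ _ _ ▸ this).1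
      simp only [one_mul] at h1
      have : (p z)⁻¹ • (p z • b' (q z)) = (p z)⁻¹ • ((1 : G) • b z) := by rw [h1]
      simpa [smul_smul] using this
  · rintro ⟨u, v, hu, hv, hvbij, hav, hbv⟩
    refine ⟨fun gz => (gz.1 * (u gz.2)⁻¹, v gz.2), ?_, ?_, ?_⟩
    · constructor
      · rintro ⟨g1, z1⟩ ⟨g2, z2⟩ h
        simp only [Prod.mk.injEq] at h
        obtain ⟨h1, h2⟩ := h
        have hz : z1 = z2 := hvbij.1 h2
        subst hz
        have : g1 = g2 := by
          have := mul_right_cancel h1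
          exact this
        exact Prod.ext this rfl
      · rintro ⟨h, z'⟩
        obtain ⟨z, rfl⟩ := hvbij.2 z'
        exact ⟨(h * u z, z), by simp⟩
    · intro s t g z
      simp only [hu, hv, Prod.mk.injEq]
      constructor
      · group
      · trivial
    · intro g z
      simp only [hbv, hav, Prod.mk.injEq, smul_smul]
      constructor
      · congr 1
        group
      · trivial
end

section
/- Let Z₁, Z₂ and Y be G-sets. Restriction of maps induces a bijection from the quotient set Hom_G(Z₁ ⊔ Z₂, G^c)\Hom_G(Z₁ ⊔ Z₂, Y) onto the product (Hom_G(Z₁, G^c)\Hom_G(Z₁, Y)) × (Hom_G(Z₂, G^c)\Hom_G(Z₂, Y)), where in each case the group of equivariant maps to G^c acts on equivariant maps to Y by (u, w) ↦ u*w. (This expresses that disjoint union of G-sets is a coproduct in the category of fused G-sets.) -/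
/-- Disjoint union is a coproduct of fused `G`-sets: restriction induces a bijection from the
quotient `Hom_G(Z₁ ⊕ Z₂, G^c)\Hom_G(Z₁ ⊕ Z₂, Y)` onto the product of the quotients
`Hom_G(Zᵢ, G^c)\Hom_G(Zᵢ, Y)`. Concretely: (surjectivity) every pair of equivariant maps
`Zᵢ → Y` is the pair of restrictions of an equivariant map `Z₁ ⊕ Z₂ → Y`; (injectivity and
well-definedness) two equivariant maps `w, w' : Z₁ ⊕ Z₂ → Y` lie in the same orbit of
`Hom_G(Z₁ ⊕ Z₂, G^c)` iff their restrictions to `Z₁` and to `Z₂` each lie in the same orbit. -/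
theorem stmt_17 (G Z₁ Z₂ Y : Type*) [Group G] [MulAction G Z₁] [MulAction G Z₂]
    [MulAction G Y] :
    (∀ (w₁ : Z₁ → Y) (w₂ : Z₂ → Y),
      (∀ (g : G) (z : Z₁), w₁ (g • z) = g • w₁ z) →
      (∀ (g : G) (z : Z₂), w₂ (g • z) = g • w₂ z) →
      ∃ w : Z₁ ⊕ Z₂ → Y,
        (∀ (g : G) (z : Z₁ ⊕ Z₂), w (g • z) = g • w z) ∧
        (∀ z : Z₁, w (Sum.inl z) = w₁ z) ∧ (∀ z : Z₂, w (Sum.inr z) = w₂ z)) ∧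
    (∀ w w' : Z₁ ⊕ Z₂ → Y,
      (∀ (g : G) (z : Z₁ ⊕ Z₂), w (g • z) = g • w z) →
      (∀ (g : G) (z : Z₁ ⊕ Z₂), w' (g • z) = g • w' z) →
      ((∃ u : Z₁ ⊕ Z₂ → G,
          (∀ (g : G) (z : Z₁ ⊕ Z₂), u (g • z) = g * u z * g⁻¹) ∧
          ∀ z : Z₁ ⊕ Z₂, w' z = u z • w z) ↔
        ((∃ u₁ : Z₁ → G,
            (∀ (g : G) (z : Z₁), u₁ (g • z) = g * u₁ z * g⁻¹) ∧
            ∀ z : Z₁, w' (Sum.inl z) = u₁ z • w (Sum.inl z)) ∧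
         (∃ u₂ : Z₂ → G,
            (∀ (g : G) (z : Z₂), u₂ (g • z) = g * u₂ z * g⁻¹) ∧
            ∀ z : Z₂, w' (Sum.inr z) = u₂ z • w (Sum.inr z))))) := by
  constructor
  · intro w₁ w₂ h₁ h₂
    exact ⟨Sum.elim w₁ w₂, by rintro g (z|z) <;> simp [h₁, h₂], fun z => rfl, fun z => rfl⟩
  · intro w w' hw hw'
    constructor
    · rintro ⟨u, hu, huw⟩
      exact ⟨⟨fun z => u (Sum.inl z), fun g z => by simpa using hu g (Sum.inl z),
          fun z => huw _⟩,
        ⟨fun z => u (Sum.inr z), fun g z => by simpa using hu g (Sum.inr z), fun z => huw _⟩⟩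
    · rintro ⟨⟨u₁, hu₁, h1⟩, ⟨u₂, hu₂, h2⟩⟩
      exact ⟨Sum.elim u₁ u₂, by rintro g (z|z) <;> simp [hu₁, hu₂],
        by rintro (z|z) <;> simp [h1, h2]⟩
end
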